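/- arXiv:2206.05527 — 6 statements merged into one kernel-verified Lean document; each statement's English description precedes it below -/
import Mathlib

section
/- Let n ≥ 1 be an integer, R0 ≥ 1, and let 0 < γ0 ≤ 1 ≤ γ1 be real constants. Let A ⊂ B(0,R0/2) ⊂ ℂ^n be a nonempty finite set with weight function ν : A → (0,∞) satisfying ν(a) ≥ γ0 for every a ∈ A and Σ_{a∈A} ν(a) ≤ γ1. Then for every 0 < δ < R0 and every z ∈ B(0,R0/2) with z ∉ A_δ, one has φ(z,A) + (γ1/γ0)·log(δ/R0) ≤ ψ(z,A) ≤ φ(z,A). -/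
/-! Outside `A_δ` every term `ν(a) log(|z - a|/R0)` lies in `[log(δ/R0), 0]`: the lower end is the
defining radius of `A_δ`, the upper end holds because `z` and `a` are in `B(0, R0/2)`. Splitting
off a minimal term, `ψ` is `φ` plus at most `#A - 1` such terms, and `#A ≤ γ1/γ0` since every
weight is at least `γ0`. -/

open Finset Metric Real

namespace Finset

variable {ι : Type*} {s : Finset ι}

theorem sum_le_inf'_of_nonpos (hs : s.Nonempty) {f : ι → ℝ} (hf : ∀ i ∈ s, f i ≤ 0) :
    ∑ i ∈ s, f i ≤ s.inf' hs f := by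
  classical
  obtain ⟨i, hi, hmin⟩ := s.exists_mem_eq_inf' hs f
  rw [hmin, ← add_sum_erase s f hi]
  have hrest : ∑ j ∈ s.erase i, f j ≤ 0 := sum_nonpos fun j hj => hf j (mem_of_mem_erase hj)
  linarith

theorem inf'_add_mul_le_sum (hs : s.Nonempty) {f : ι → ℝ} {L C : ℝ} (hL : L ≤ 0)
    (hC : (#s : ℝ) ≤ C) (hf : ∀ i ∈ s, L ≤ f i) :
    s.inf' hs f + C * L ≤ ∑ i ∈ s, f i := by
  classical
  obtain ⟨i, hi, hmin⟩ := s.exists_mem_eq_inf' hs f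
  rw [hmin, ← add_sum_erase s f hi]
  have hrest : #(s.erase i) • L ≤ ∑ j ∈ s.erase i, f j :=
    card_nsmul_le_sum _ _ _ fun j hj => hf j (mem_of_mem_erase hj)
  have hcard : (#(s.erase i) : ℝ) ≤ C := le_trans (by exact_mod_cast card_erase_le) hC
  have hscaled := mul_le_mul_of_nonpos_right hcard hL
  rw [nsmul_eq_mul] at hrest
  linarith

theorem card_le_div_of_le_of_sum_le {ν : ι → ℝ} {γ0 γ1 : ℝ} (hγ0 : 0 < γ0)
    (hlb : ∀ i ∈ s, γ0 ≤ ν i) (hsum : ∑ i ∈ s, ν i ≤ γ1) : (#s : ℝ) ≤ γ1 / γ0 := by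
  have h := card_nsmul_le_sum s ν γ0 hlb
  rw [nsmul_eq_mul] at h
  rw [le_div_iff₀ hγ0]
  linarith

end Finset

namespace Real

theorem log_div_le_mul_log_div_of_mul_rpow_le {R δ ν r : ℝ} (hR : 0 < R) (hδ : 0 < δ)
    (hν : 0 < ν) (hr : R * (δ / R) ^ (1 / ν) ≤ r) : log (δ / R) ≤ ν * log (r / R) := by
  have hδR : 0 < δ / R := div_pos hδ hR
  have h := log_le_log (rpow_pos_of_pos hδR _) ((le_div_iff₀' hR).2 hr)
  rw [log_rpow hδR] at h
  calc log (δ / R) = ν * (1 / ν * log (δ / R)) := by field_simp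
    _ ≤ ν * log (r / R) := mul_le_mul_of_nonneg_left h hν.le

end Real

theorem stmt_1_general (n : ℕ) (R0 : ℝ)
    (γ0 γ1 : ℝ) (hγ0 : 0 < γ0)
    (A : Finset (EuclideanSpace ℂ (Fin n))) (hA : A.Nonempty)
    (hAball : (A : Set (EuclideanSpace ℂ (Fin n))) ⊆ Metric.ball 0 (R0 / 2))
    (ν : EuclideanSpace ℂ (Fin n) → ℝ)
    (hνpos : ∀ a ∈ A, 0 < ν a)
    (hνlb : ∀ a ∈ A, γ0 ≤ ν a)
    (hνsum : ∑ a ∈ A, ν a ≤ γ1)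
    (δ : ℝ) (hδ : 0 < δ) (hδR : δ < R0)
    (z : EuclideanSpace ℂ (Fin n))
    (hzball : z ∈ Metric.ball (0 : EuclideanSpace ℂ (Fin n)) (R0 / 2))
    (hz : z ∉ ⋃ a ∈ A, Metric.ball a (R0 * (δ / R0) ^ (1 / ν a))) :
    A.inf' hA (fun a => ν a * Real.log (‖z - a‖ / R0)) + γ1 / γ0 * Real.log (δ / R0)
      ≤ ∑ a ∈ A, ν a * Real.log (‖z - a‖ / R0)
    ∧ ∑ a ∈ A, ν a * Real.log (‖z - a‖ / R0)
      ≤ A.inf' hA (fun a => ν a * Real.log (‖z - a‖ / R0)) := by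
  have hR0 : 0 < R0 := hδ.trans hδR
  have hlog_nonpos : log (δ / R0) ≤ 0 := (log_neg (div_pos hδ hR0) ((div_lt_one hR0).2 hδR)).le
  have hfar : ∀ a ∈ A, R0 * (δ / R0) ^ (1 / ν a) ≤ ‖z - a‖ := by
    simpa [dist_eq_norm] using hz
  have hnear : ∀ a ∈ A, ‖z - a‖ ≤ R0 := fun a ha => by
    have hz' := mem_ball_zero_iff.1 hzball
    have ha' := mem_ball_zero_iff.1 (hAball ha)
    linarith [norm_sub_le z a]
  refine ⟨inf'_add_mul_le_sum hA hlog_nonpos (card_le_div_of_le_of_sum_le hγ0 hνlb hνsum)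
    fun a ha => log_div_le_mul_log_div_of_mul_rpow_le hR0 hδ (hνpos a ha) (hfar a ha),
    sum_le_inf'_of_nonpos hA fun a ha => ?_⟩
  exact mul_nonpos_of_nonneg_of_nonpos (hνpos a ha).le
    (log_nonpos (by positivity) ((div_le_one hR0).2 (hnear a ha)))

/-- case m = n. Estimate φ(z,A) + (γ1/γ0)·log(δ/R0) ≤ ψ(z,A) ≤ φ(z,A)
for z ∈ B(0,R0/2) outside the sublevel set A_δ. -/
theorem stmt_1 (n : ℕ) (hn : 1 ≤ n) (R0 : ℝ) (hR0 : 1 ≤ R0)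
    (γ0 γ1 : ℝ) (hγ0 : 0 < γ0) (hγ0' : γ0 ≤ 1) (hγ1 : 1 ≤ γ1)
    (A : Finset (EuclideanSpace ℂ (Fin n))) (hA : A.Nonempty)
    (hAball : (A : Set (EuclideanSpace ℂ (Fin n))) ⊆ Metric.ball 0 (R0 / 2))
    (ν : EuclideanSpace ℂ (Fin n) → ℝ)
    (hνpos : ∀ a ∈ A, 0 < ν a)
    (hνlb : ∀ a ∈ A, γ0 ≤ ν a)
    (hνsum : ∑ a ∈ A, ν a ≤ γ1)
    (δ : ℝ) (hδ : 0 < δ) (hδR : δ < R0)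
    (z : EuclideanSpace ℂ (Fin n))
    (hzball : z ∈ Metric.ball (0 : EuclideanSpace ℂ (Fin n)) (R0 / 2))
    (hz : z ∉ ⋃ a ∈ A, Metric.ball a (R0 * (δ / R0) ^ (1 / ν a))) :
    A.inf' hA (fun a => ν a * Real.log (‖z - a‖ / R0)) + γ1 / γ0 * Real.log (δ / R0)
      ≤ ∑ a ∈ A, ν a * Real.log (‖z - a‖ / R0)
    ∧ ∑ a ∈ A, ν a * Real.log (‖z - a‖ / R0)
      ≤ A.inf' hA (fun a => ν a * Real.log (‖z - a‖ / R0)) :=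
  stmt_1_general n R0 γ0 γ1 hγ0 A hA hAball ν hνpos hνlb hνsum δ hδ hδR z hzball hz
end

section
/- Let n ≥ 1 be an integer, R0 ≥ 1, and let 0 < γ0 ≤ 1 ≤ γ1 be real constants. Let A ⊂ B(0,R0/2) ⊂ ℂ^n be a finite set with at least two elements and weight function ν : A → (0,∞) satisfying ν(a) ≥ γ0 for every a ∈ A and Σ_{a∈A} ν(a) ≤ γ1. Then for every δ with 0 < δ ≤ R0·(σ_A/R0)^{γ1} and every z ∈ (A_δ ∩ B(0,R0/2)) \ A, one has φ(z,A) + log(δ/R0) ≤ ψ(z,A) ≤ φ(z,A). -/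
/-!
The point `z` lies in the ball of radius `R0 (δ/R0)^{1/ν(a₀)} ≤ σ_A` around some `a₀ ∈ A`,
where the radius bound uses `ν(a₀) ≤ Σ ν ≤ γ1`. All distances `|z - a|` are below `R0`, so
every summand of `ψ` is nonpositive and `ψ ≤ φ`. Every other `a ∈ A` is at distance at least
`σ_A` from `z`, so the summands with `a ≠ a₀` add up to at least `γ1 log(σ_A/R0) ≥ log(δ/R0)`,
while the summand at `a₀` is at least `φ`.
-/

open Metric

theorem Finset.sum_le_inf'_of_nonpos_s3 {ι M : Type*} [AddCommMonoid M] [LinearOrder M]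
    [IsOrderedAddMonoid M] {s : Finset ι} (hs : s.Nonempty) {f : ι → M}
    (hf : ∀ i ∈ s, f i ≤ 0) : ∑ i ∈ s, f i ≤ s.inf' hs f :=
  Finset.le_inf' hs f fun i hi => by
    classical
    rw [← Finset.add_sum_erase s f hi]
    exact add_le_of_nonpos_right (Finset.sum_nonpos fun j hj => hf j (Finset.mem_of_mem_erase hj))

theorem Real.rpow_one_div_le_of_le_rpow {t s γ ν : ℝ} (ht : 0 ≤ t) (hts : t ≤ s ^ γ)
    (hs : 0 < s) (hs₁ : s ≤ 1) (hν : 0 < ν) (hνγ : ν ≤ γ) : t ^ (1 / ν) ≤ s :=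
  calc t ^ (1 / ν) ≤ (s ^ γ) ^ (1 / ν) := Real.rpow_le_rpow ht hts (by positivity)
    _ = s ^ (γ * (1 / ν)) := (Real.rpow_mul hs.le _ _).symm
    _ ≤ s ^ (1 : ℝ) := Real.rpow_le_rpow_of_exponent_ge hs hs₁ (by
        rw [mul_one_div, le_div_iff₀ hν, one_mul]; exact hνγ)
    _ = s := Real.rpow_one s

theorem Real.mul_log_div_nonpos {ν x R : ℝ} (hν : 0 ≤ ν) (hx : 0 ≤ x) (hxR : x ≤ R) :
    ν * Real.log (x / R) ≤ 0 :=
  mul_nonpos_of_nonneg_of_nonpos hν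
    (Real.log_nonpos (div_nonneg hx (hx.trans hxR)) (div_le_one_of_le₀ hxR (hx.trans hxR)))

section NormedGroup

variable {E : Type*} [SeminormedAddCommGroup E]

theorem norm_sub_lt_of_mem_ball_zero {r : ℝ} {x y : E} (hx : x ∈ ball 0 r) (hy : y ∈ ball 0 r) :
    ‖x - y‖ < 2 * r := by
  rw [mem_ball_zero_iff] at hx hy
  linarith [norm_sub_le x y]

theorem le_norm_sub_of_norm_sub_lt {σ : ℝ} {z a b : E} (hza : ‖z - a‖ < σ) (hab : 2 * σ ≤ ‖b - a‖) :
    σ ≤ ‖z - b‖ := by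
  have := norm_sub_le_norm_sub_add_norm_sub b z a
  rw [norm_sub_rev b z] at this
  linarith

theorem mul_log_le_sum_erase_mul_log [DecidableEq E] {s : Finset E} {a₀ z : E} {ν : E → ℝ}
    {σ R γ : ℝ}
    (hza₀ : ‖z - a₀‖ < σ) (hsep : ∀ a ∈ s, a ≠ a₀ → 2 * σ ≤ ‖a - a₀‖)
    (hσ : 0 < σ) (hσR : σ ≤ R) (hν : ∀ a ∈ s, 0 ≤ ν a) (hνsum : ∑ a ∈ s, ν a ≤ γ) :
    γ * Real.log (σ / R) ≤ ∑ a ∈ s.erase a₀, ν a * Real.log (‖z - a‖ / R) := by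
  have hR : 0 < R := hσ.trans_le hσR
  have hlogσ : Real.log (σ / R) ≤ 0 := Real.log_nonpos (by positivity) ((div_le_one hR).2 hσR)
  have hνsum' : ∑ a ∈ s.erase a₀, ν a ≤ γ :=
    (Finset.sum_le_sum_of_subset_of_nonneg (Finset.erase_subset a₀ s)
      fun a ha _ => hν a ha).trans hνsum
  calc γ * Real.log (σ / R) ≤ (∑ a ∈ s.erase a₀, ν a) * Real.log (σ / R) :=
        mul_le_mul_of_nonpos_right hνsum' hlogσ
    _ = ∑ a ∈ s.erase a₀, ν a * Real.log (σ / R) := Finset.sum_mul _ _ _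
    _ ≤ ∑ a ∈ s.erase a₀, ν a * Real.log (‖z - a‖ / R) := by
        refine Finset.sum_le_sum fun a ha => ?_
        obtain ⟨hne, has⟩ := Finset.mem_erase.1 ha
        have hσa : σ ≤ ‖z - a‖ := le_norm_sub_of_norm_sub_lt hza₀ (hsep a has hne)
        exact mul_le_mul_of_nonneg_left
          (Real.log_le_log (by positivity) (div_le_div_of_nonneg_right hσa hR.le)) (hν a has)

theorem inf'_mul_log_add_log_le_sum_mul_log {s : Finset E} (hs : s.Nonempty) {a₀ z : E}
    {ν : E → ℝ} {σ R γ δ : ℝ} (ha₀ : a₀ ∈ s) (hza₀ : ‖z - a₀‖ < σ)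
    (hsep : ∀ a ∈ s, a ≠ a₀ → 2 * σ ≤ ‖a - a₀‖) (hσ : 0 < σ) (hσR : σ ≤ R)
    (hν : ∀ a ∈ s, 0 ≤ ν a) (hνsum : ∑ a ∈ s, ν a ≤ γ) (hδ : 0 < δ) (hδσ : δ / R ≤ (σ / R) ^ γ) :
    s.inf' hs (fun a => ν a * Real.log (‖z - a‖ / R)) + Real.log (δ / R)
      ≤ ∑ a ∈ s, ν a * Real.log (‖z - a‖ / R) := by
  classical
  have hR : 0 < R := hσ.trans_le hσR
  have hlogδ : Real.log (δ / R) ≤ γ * Real.log (σ / R) := by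
    rw [← Real.log_rpow (by positivity)]
    exact Real.log_le_log (by positivity) hδσ
  rw [← Finset.add_sum_erase s _ ha₀]
  exact add_le_add (Finset.inf'_le _ ha₀)
    (hlogδ.trans (mul_log_le_sum_erase_mul_log hza₀ hsep hσ hσR hν hνsum))

end NormedGroup

theorem stmt_3_general (n : ℕ) (R0 : ℝ) (hR0 : 1 ≤ R0)
    (γ1 : ℝ)
    (A : Finset (EuclideanSpace ℂ (Fin n))) (hA : A.Nonempty)
    (hAball : (A : Set (EuclideanSpace ℂ (Fin n))) ⊆ Metric.ball 0 (R0 / 2))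
    (ν : EuclideanSpace ℂ (Fin n) → ℝ)
    (hνpos : ∀ a ∈ A, 0 < ν a)
    (hνsum : ∑ a ∈ A, ν a ≤ γ1)
    (σA : ℝ)
    (hσ1 : ∀ a ∈ A, ∀ b ∈ A, a ≠ b → 2 * σA ≤ ‖a - b‖)
    (hσ2 : ∃ a ∈ A, ∃ b ∈ A, a ≠ b ∧ ‖a - b‖ = 2 * σA)
    (δ : ℝ) (hδ : 0 < δ) (hδσ : δ ≤ R0 * (σA / R0) ^ γ1)
    (z : EuclideanSpace ℂ (Fin n))
    (hzA : z ∈ ⋃ a ∈ A, Metric.ball a (R0 * (δ / R0) ^ (1 / ν a)))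
    (hzball : z ∈ Metric.ball (0 : EuclideanSpace ℂ (Fin n)) (R0 / 2)) :
    A.inf' hA (fun a => ν a * Real.log (‖z - a‖ / R0)) + Real.log (δ / R0)
      ≤ ∑ a ∈ A, ν a * Real.log (‖z - a‖ / R0)
    ∧ ∑ a ∈ A, ν a * Real.log (‖z - a‖ / R0)
      ≤ A.inf' hA (fun a => ν a * Real.log (‖z - a‖ / R0)) := by
  have hR0pos : 0 < R0 := one_pos.trans_le hR0
  obtain ⟨b₁, hb₁, b₂, hb₂, hb, hbσ⟩ := hσ2
  have hσpos : 0 < σA := by linarith [norm_pos_iff.2 (sub_ne_zero.2 hb)]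
  have hσR : σA ≤ R0 := by linarith [norm_sub_lt_of_mem_ball_zero (hAball hb₁) (hAball hb₂)]
  have hδσ' : δ / R0 ≤ (σA / R0) ^ γ1 := by rwa [div_le_iff₀' hR0pos]
  obtain ⟨a₀, ha₀, hza₀⟩ : ∃ a ∈ A, ‖z - a‖ < R0 * (δ / R0) ^ (1 / ν a) := by
    simpa only [Set.mem_iUnion, mem_ball, dist_eq_norm, exists_prop] using hzA
  have hνa₀ : ν a₀ ≤ γ1 :=
    (Finset.single_le_sum (fun a ha => (hνpos a ha).le) ha₀).trans hνsum
  have hza₀σ : ‖z - a₀‖ < σA :=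
    calc ‖z - a₀‖ < R0 * (δ / R0) ^ (1 / ν a₀) := hza₀
      _ ≤ R0 * (σA / R0) := by
          gcongr
          exact Real.rpow_one_div_le_of_le_rpow (by positivity) hδσ' (by positivity)
            ((div_le_one hR0pos).2 hσR) (hνpos a₀ ha₀) hνa₀
      _ = σA := mul_div_cancel₀ σA hR0pos.ne'
  refine ⟨inf'_mul_log_add_log_le_sum_mul_log hA ha₀ hza₀σ (fun a ha hne => hσ1 a ha a₀ ha₀ hne)
    hσpos hσR (fun a ha => (hνpos a ha).le) hνsum hδ hδσ', ?_⟩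
  refine Finset.sum_le_inf'_of_nonpos_s3 hA fun a ha => Real.mul_log_div_nonpos (hνpos a ha).le
    (norm_nonneg _) ?_
  linarith [norm_sub_lt_of_mem_ball_zero hzball (hAball ha)]

/-- case m = n. For δ ≤ R0·(σ_A/R0)^{γ1} and z ∈ (A_δ ∩ B(0,R0/2)) \ A:
φ(z,A) + log(δ/R0) ≤ ψ(z,A) ≤ φ(z,A). Here 2σ_A is the minimal distance between
distinct points of A, characterized by hσ1 and hσ2. -/
theorem stmt_3 (n : ℕ) (hn : 1 ≤ n) (R0 : ℝ) (hR0 : 1 ≤ R0)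
    (γ0 γ1 : ℝ) (hγ0 : 0 < γ0) (hγ0' : γ0 ≤ 1) (hγ1 : 1 ≤ γ1)
    (A : Finset (EuclideanSpace ℂ (Fin n))) (hA : A.Nonempty) (hcard : 1 < A.card)
    (hAball : (A : Set (EuclideanSpace ℂ (Fin n))) ⊆ Metric.ball 0 (R0 / 2))
    (ν : EuclideanSpace ℂ (Fin n) → ℝ)
    (hνpos : ∀ a ∈ A, 0 < ν a)
    (hνlb : ∀ a ∈ A, γ0 ≤ ν a)
    (hνsum : ∑ a ∈ A, ν a ≤ γ1)
    (σA : ℝ)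
    (hσ1 : ∀ a ∈ A, ∀ b ∈ A, a ≠ b → 2 * σA ≤ ‖a - b‖)
    (hσ2 : ∃ a ∈ A, ∃ b ∈ A, a ≠ b ∧ ‖a - b‖ = 2 * σA)
    (δ : ℝ) (hδ : 0 < δ) (hδσ : δ ≤ R0 * (σA / R0) ^ γ1)
    (z : EuclideanSpace ℂ (Fin n))
    (hzA : z ∈ ⋃ a ∈ A, Metric.ball a (R0 * (δ / R0) ^ (1 / ν a)))
    (hzball : z ∈ Metric.ball (0 : EuclideanSpace ℂ (Fin n)) (R0 / 2))
    (hznA : z ∉ (A : Set (EuclideanSpace ℂ (Fin n)))) :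
    A.inf' hA (fun a => ν a * Real.log (‖z - a‖ / R0)) + Real.log (δ / R0)
      ≤ ∑ a ∈ A, ν a * Real.log (‖z - a‖ / R0)
    ∧ ∑ a ∈ A, ν a * Real.log (‖z - a‖ / R0)
      ≤ A.inf' hA (fun a => ν a * Real.log (‖z - a‖ / R0)) :=
  stmt_3_general n R0 hR0 γ1 A hA hAball ν hνpos hνsum σA hσ1 hσ2 δ hδ hδσ z hzA hzball
end

section
/- Let 1 ≤ m < n be integers, s := n/m − 1, let 0 < γ0 ≤ 1 ≤ γ1 and δ0 > 0 be real constants. Let A, A' ⊂ ℂ^n be nonempty finite sets with weight functions ν : A → (0,∞) and ν' : A' → (0,∞), each satisfying: all weights are ≥ γ0 and the total weight is ≤ γ1. Let ρ ≥ 0 be such that for every a ∈ A there exists a' ∈ A' with |a − a'| + |ν(a) − ν'(a')| ≤ ρ. Then for every δ with 0 < δ ≤ δ0, every z ∈ ℂ^n with z ∉ A_δ, and every z' ∈ ℂ^n with z' ∉ A'_δ, one has φ(z',A') ≤ φ(z,A) + (2s·γ1·γ0^{−(2s+1)/(2s)} + δ0/γ0)·δ^{−2s−1}·(|z − z'| +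 ρ). -/
/-!
Take a minimiser `a` of `φ(z, A)` and a partner `a'` of it in `A'`; then
`φ(z', A') - φ(z, A) ≤ ν(a) r^{-2s} - ν'(a') r'^{-2s}` with `r = |z - a|`, `r' = |z' - a'|`, and
this splits as `ν(a) (r^{-2s} - r'^{-2s}) + (ν(a) - ν'(a')) r'^{-2s}`. Outside `A_δ` and `A'_δ` both
distances are at least `c = γ0^{1/(2s)} δ`, on `[c, ∞)` the map `t ↦ t^{-2s}` is
`2s c^{-2s-1}`-Lipschitz and bounded by `c^{-2s} = δ^{-2s}/γ0`, and `|r - r'| ≤ |z - z'| + ρ`.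
-/

open Finset Metric Real

theorem Finset.inf'_le_inf'_add {ι κ α : Type*} [LinearOrder α] [Add α]
    {s : Finset ι} {t : Finset κ} (hs : s.Nonempty) (ht : t.Nonempty) {f : ι → α} {g : κ → α}
    {K : α} (h : ∀ i ∈ s, ∃ j ∈ t, g j ≤ f i + K) :
    t.inf' ht g ≤ s.inf' hs f + K := by
  obtain ⟨i, hi, hfi⟩ := s.exists_mem_eq_inf' hs f
  obtain ⟨j, hj, hgj⟩ := h i hi
  rw [hfi]
  exact (inf'_le g hj).trans hgj

theorem le_norm_sub_of_notMem_biUnion_ball {E : Type*} [SeminormedAddCommGroup E]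
    {A : Finset E} {r : E → ℝ} {z : E} (hz : z ∉ ⋃ a ∈ A, ball a (r a))
    {a : E} (ha : a ∈ A) : r a ≤ ‖z - a‖ := by
  by_contra! h
  exact hz (Set.mem_biUnion ha (by rwa [mem_ball, dist_eq_norm]))

theorem rpow_mul_le_norm_sub_of_notMem_biUnion_ball {E : Type*} [SeminormedAddCommGroup E]
    {A : Finset E} {ν : E → ℝ} {γ0 q δ : ℝ} (hγ0 : 0 ≤ γ0) (hq : 0 ≤ q) (hδ : 0 ≤ δ)
    (hν : ∀ a ∈ A, γ0 ≤ ν a) {z : E} (hz : z ∉ ⋃ a ∈ A, ball a (ν a ^ q * δ))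
    {a : E} (ha : a ∈ A) : γ0 ^ q * δ ≤ ‖z - a‖ :=
  (mul_le_mul_of_nonneg_right (rpow_le_rpow hγ0 (hν a ha) hq) hδ).trans
    (le_norm_sub_of_notMem_biUnion_ball hz ha)

theorem abs_rpow_neg_sub_rpow_neg_le {p c x y : ℝ} (hp : 0 < p) (hc : 0 < c) (hx : c ≤ x)
    (hy : c ≤ y) : |x ^ (-p) - y ^ (-p)| ≤ p * c ^ (-p - 1) * |x - y| := by
  have hderiv : ∀ u ∈ Set.Ici c, HasDerivWithinAt (fun t : ℝ => t ^ (-p))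
      (-p * u ^ (-p - 1)) (Set.Ici c) u := fun u hu =>
    (hasDerivAt_rpow_const (Or.inl (hc.trans_le hu).ne')).hasDerivWithinAt
  have hbound : ∀ u ∈ Set.Ici c, ‖-p * u ^ (-p - 1)‖ ≤ p * c ^ (-p - 1) := by
    intro u hu
    rw [norm_eq_abs, abs_mul, abs_neg, abs_of_pos hp,
      abs_of_pos (rpow_pos_of_pos (hc.trans_le hu) _)]
    exact mul_le_mul_of_nonneg_left (rpow_le_rpow_of_nonpos hc hu (by linarith)) hp.le
  simpa [norm_eq_abs, abs_sub_comm] using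
    (convex_Ici c).norm_image_sub_le_of_norm_hasDerivWithin_le hderiv hbound hy hx

theorem mul_rpow_neg_sub_mul_rpow_neg_le {p c w w' r r' : ℝ} (hp : 0 < p) (hc : 0 < c)
    (hr : c ≤ r) (hr' : c ≤ r') (hw : 0 ≤ w) :
    w * r ^ (-p) - w' * r' ^ (-p) ≤ w * (p * c ^ (-p - 1) * |r - r'|) + |w - w'| * c ^ (-p) := by
  have hdiff : w * (r ^ (-p) - r' ^ (-p)) ≤ w * (p * c ^ (-p - 1) * |r - r'|) :=
    mul_le_mul_of_nonneg_left ((le_abs_self _).trans (abs_rpow_neg_sub_rpow_neg_le hp hc hr hr')) hw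
  have hweight : (w - w') * r' ^ (-p) ≤ |w - w'| * c ^ (-p) :=
    mul_le_mul (le_abs_self _) (rpow_le_rpow_of_nonpos hc hr' (by linarith))
      (rpow_pos_of_pos (hc.trans_le hr') _).le (abs_nonneg _)
  linarith

theorem rpow_one_div_mul_rpow_neg_sub_one {γ δ p : ℝ} (hγ : 0 ≤ γ) (hδ : 0 ≤ δ) (hp : p ≠ 0) :
    (γ ^ (1 / p) * δ) ^ (-p - 1) = γ ^ (-(p + 1) / p) * δ ^ (-p - 1) := by
  rw [mul_rpow (rpow_nonneg hγ _) hδ, ← rpow_mul hγ]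
  congr 2
  field_simp
  ring

theorem rpow_one_div_mul_rpow_neg {γ δ p : ℝ} (hγ : 0 ≤ γ) (hδ : 0 ≤ δ) (hp : p ≠ 0) :
    (γ ^ (1 / p) * δ) ^ (-p) = γ⁻¹ * δ ^ (-p) := by
  rw [mul_rpow (rpow_nonneg hγ _) hδ, ← rpow_mul hγ, one_div_mul_eq_div, neg_div, div_self hp,
    rpow_neg_one]

theorem mul_rpow_neg_sub_mul_rpow_neg_le_of_le_rpow_mul {p γ0 γ1 δ δ0 w w' r r' W : ℝ}
    (hp : 0 < p) (hγ0 : 0 < γ0) (hδ : 0 < δ) (hδδ0 : δ ≤ δ0)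
    (hr : γ0 ^ (1 / p) * δ ≤ r) (hr' : γ0 ^ (1 / p) * δ ≤ r') (hw : 0 ≤ w) (hwγ1 : w ≤ γ1)
    (hrr' : |r - r'| ≤ W) (hww' : |w - w'| ≤ W) :
    w * r ^ (-p) - w' * r' ^ (-p)
      ≤ (p * γ1 * γ0 ^ (-(p + 1) / p) + δ0 / γ0) * δ ^ (-p - 1) * W := by
  have hc : 0 < γ0 ^ (1 / p) * δ := by positivity
  have hδpow : δ ^ (-p) = δ * δ ^ (-p - 1) := by
    rw [← rpow_one_add' hδ.le (by linarith)]
    ring_nf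
  have hW : 0 ≤ W := (abs_nonneg _).trans hww'
  have hγ1 : 0 ≤ γ1 := hw.trans hwγ1
  calc w * r ^ (-p) - w' * r' ^ (-p)
      ≤ w * (p * (γ0 ^ (1 / p) * δ) ^ (-p - 1) * |r - r'|) + |w - w'| * (γ0 ^ (1 / p) * δ) ^ (-p) :=
        mul_rpow_neg_sub_mul_rpow_neg_le hp hc hr hr' hw
    _ = w * (p * (γ0 ^ (-(p + 1) / p) * δ ^ (-p - 1)) * |r - r'|)
          + |w - w'| * (γ0⁻¹ * (δ * δ ^ (-p - 1))) := by
        rw [rpow_one_div_mul_rpow_neg_sub_one hγ0.le hδ.le hp.ne',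
          rpow_one_div_mul_rpow_neg hγ0.le hδ.le hp.ne', hδpow]
    _ ≤ γ1 * (p * (γ0 ^ (-(p + 1) / p) * δ ^ (-p - 1)) * W)
          + W * (γ0⁻¹ * (δ0 * δ ^ (-p - 1))) := by gcongr
    _ = (p * γ1 * γ0 ^ (-(p + 1) / p) + δ0 / γ0) * δ ^ (-p - 1) * W := by
        field_simp

theorem stmt_6_general (m n : ℕ) (hm : 1 ≤ m) (hmn : m < n)
    (s : ℝ) (hs : s = (n : ℝ) / (m : ℝ) - 1)
    (γ0 γ1 : ℝ) (hγ0 : 0 < γ0)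
    (δ0 : ℝ)
    (A A' : Finset (EuclideanSpace ℂ (Fin n))) (hA : A.Nonempty) (hA' : A'.Nonempty)
    (ν ν' : EuclideanSpace ℂ (Fin n) → ℝ)
    (hνpos : ∀ a ∈ A, 0 < ν a) (hνlb : ∀ a ∈ A, γ0 ≤ ν a) (hνsum : ∑ a ∈ A, ν a ≤ γ1)
    (hν'lb : ∀ a ∈ A', γ0 ≤ ν' a)
    (ρ : ℝ)
    (hcover : ∀ a ∈ A, ∃ a' ∈ A', ‖a - a'‖ + |ν a - ν' a'| ≤ ρ)
    (δ : ℝ) (hδ : 0 < δ) (hδδ0 : δ ≤ δ0)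
    (z : EuclideanSpace ℂ (Fin n))
    (hz : z ∉ ⋃ a ∈ A, Metric.ball a (ν a ^ (1 / (2 * s)) * δ))
    (z' : EuclideanSpace ℂ (Fin n))
    (hz' : z' ∉ ⋃ a ∈ A', Metric.ball a (ν' a ^ (1 / (2 * s)) * δ)) :
    A'.inf' hA' (fun a => -(ν' a * ‖z' - a‖ ^ (-(2 * s))))
      ≤ A.inf' hA (fun a => -(ν a * ‖z - a‖ ^ (-(2 * s))))
        + (2 * s * γ1 * γ0 ^ (-(2 * s + 1) / (2 * s)) + δ0 / γ0)
          * δ ^ (-(2 * s) - 1) * (‖z - z'‖ + ρ) := by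
  have hs0 : 0 < s := by
    have hm0 : (0 : ℝ) < m := by exact_mod_cast hm
    rw [hs, sub_pos, one_lt_div hm0]
    exact_mod_cast hmn
  have hq : 0 ≤ 1 / (2 * s) := by positivity
  refine Finset.inf'_le_inf'_add hA hA' fun a ha => ?_
  obtain ⟨a', ha', hcov⟩ := hcover a ha
  refine ⟨a', ha', ?_⟩
  have hdist : |‖z - a‖ - ‖z' - a'‖| ≤ ‖z - z'‖ + ‖a - a'‖ := by
    simpa only [dist_eq_norm, Real.norm_eq_abs] using dist_dist_dist_le z a z' a'
  have key := mul_rpow_neg_sub_mul_rpow_neg_le_of_le_rpow_mul (by positivity) hγ0 hδ hδδ0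
    (rpow_mul_le_norm_sub_of_notMem_biUnion_ball hγ0.le hq hδ.le hνlb hz ha)
    (rpow_mul_le_norm_sub_of_notMem_biUnion_ball hγ0.le hq hδ.le hν'lb hz' ha')
    (hνpos a ha).le ((single_le_sum (fun b hb => (hνpos b hb).le) ha).trans hνsum)
    (W := ‖z - z'‖ + ρ) (by linarith [abs_nonneg (ν a - ν' a')])
    (by linarith [norm_nonneg (z - z'), norm_nonneg (a - a')])
  linarith

/-- case 1 ≤ m < n. Lipschitz-type estimate for φ:
φ(z',A') ≤ φ(z,A) + (2s·γ1·γ0^{−(2s+1)/(2s)} + δ0/γ0)·δ^{−2s−1}·(|z − z'| + ρ). -/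
theorem stmt_6 (m n : ℕ) (hm : 1 ≤ m) (hmn : m < n)
    (s : ℝ) (hs : s = (n : ℝ) / (m : ℝ) - 1)
    (γ0 γ1 : ℝ) (hγ0 : 0 < γ0) (hγ0' : γ0 ≤ 1) (hγ1 : 1 ≤ γ1)
    (δ0 : ℝ) (hδ0 : 0 < δ0)
    (A A' : Finset (EuclideanSpace ℂ (Fin n))) (hA : A.Nonempty) (hA' : A'.Nonempty)
    (ν ν' : EuclideanSpace ℂ (Fin n) → ℝ)
    (hνpos : ∀ a ∈ A, 0 < ν a) (hνlb : ∀ a ∈ A, γ0 ≤ ν a) (hνsum : ∑ a ∈ A, ν a ≤ γ1)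
    (hν'pos : ∀ a ∈ A', 0 < ν' a) (hν'lb : ∀ a ∈ A', γ0 ≤ ν' a)
    (hν'sum : ∑ a ∈ A', ν' a ≤ γ1)
    (ρ : ℝ) (hρ : 0 ≤ ρ)
    (hcover : ∀ a ∈ A, ∃ a' ∈ A', ‖a - a'‖ + |ν a - ν' a'| ≤ ρ)
    (δ : ℝ) (hδ : 0 < δ) (hδδ0 : δ ≤ δ0)
    (z : EuclideanSpace ℂ (Fin n))
    (hz : z ∉ ⋃ a ∈ A, Metric.ball a (ν a ^ (1 / (2 * s)) * δ))
    (z' : EuclideanSpace ℂ (Fin n))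
    (hz' : z' ∉ ⋃ a ∈ A', Metric.ball a (ν' a ^ (1 / (2 * s)) * δ)) :
    A'.inf' hA' (fun a => -(ν' a * ‖z' - a‖ ^ (-(2 * s))))
      ≤ A.inf' hA (fun a => -(ν a * ‖z - a‖ ^ (-(2 * s))))
        + (2 * s * γ1 * γ0 ^ (-(2 * s + 1) / (2 * s)) + δ0 / γ0)
          * δ ^ (-(2 * s) - 1) * (‖z - z'‖ + ρ) :=
  stmt_6_general m n hm hmn s hs γ0 γ1 hγ0 δ0 A A' hA hA' ν ν' hνpos hνlb hνsum hν'lb ρ hcover δ hδ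
    hδδ0 z hz z' hz'
end

section
/- Let n ≥ 1 be an integer, R0 ≥ 1, and let 0 < γ0 ≤ 1 ≤ γ1 and 0 < δ0 < R0 be real constants. Let A, A' ⊂ B(0,R0/2) ⊂ ℂ^n be nonempty finite sets with weight functions ν : A → (0,∞) and ν' : A' → (0,∞), each satisfying: all weights are ≥ γ0 and the total weight is ≤ γ1. Let ρ ≥ 0 be such that for every a ∈ A there exists a' ∈ A' with |a − a'| + |ν(a) − ν'(a')| ≤ ρ. Then for every δ with 0 < δ ≤ δ0, every z ∈ B(0,R0/2) with z ∉ A_δ, and every z' ∈ B(0,R0/2) with z' ∉ A'_δ, one has φ(z',A') ≤ φ(z,A) + 2γ1·(R0/δ)^{1/γ0}·(|z − z'| + ρ). -/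
open Finset Metric Real

/-!
Let `a₀` realise the minimum defining `φ(z, A)` and let `a'` be a point of `A'` that is
`ρ`-close to it. Since `z` lies outside the small balls, `‖z - a₀‖ ≥ R0 / K` with
`K = (R0 / δ) ^ (1 / γ0)`, so both `1 / ‖z - a₀‖` and `|log (‖z - a₀‖ / R0)|` are at most `K`.
Writing `ν' log r' = ν' (log r' - log r) + (ν' - ν) log r + ν log r`, the first term is
controlled by `log x ≤ x - 1` and the triangle inequality, the second by `|ν' - ν| ≤ ρ`;
each contributes at most `γ1 K (|z - z'| + ρ)`.
-/

lemma div_rpow_one_div_le_mul_rpow {R δ γ ν : ℝ} (hδ : 0 < δ) (hδR : δ ≤ R) (hγ : 0 < γ)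
    (hγν : γ ≤ ν) : R / (R / δ) ^ (1 / γ) ≤ R * (δ / R) ^ (1 / ν) := by
  have hR : 0 < R := hδ.trans_le hδR
  rw [div_eq_mul_inv, ← inv_rpow (by positivity), inv_div]
  refine mul_le_mul_of_nonneg_left ?_ hR.le
  exact rpow_le_rpow_of_exponent_ge (by positivity) ((div_le_one hR).2 hδR)
    (one_div_le_one_div_of_le hγ hγν)

lemma log_sub_log_le_mul {r r' K t : ℝ} (hr : 0 < r) (hr' : 0 < r') (hK : r⁻¹ ≤ K)
    (ht : 0 ≤ t) (h : r' - r ≤ t) : log r' - log r ≤ K * t := by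
  calc log r' - log r = log (r' / r) := (log_div hr'.ne' hr.ne').symm
    _ ≤ r' / r - 1 := log_le_sub_one_of_pos (by positivity)
    _ = (r' - r) * r⁻¹ := by field_simp
    _ ≤ t * K := by
      rcases le_total (r' - r) 0 with hneg | hpos
      · nlinarith [inv_pos.2 hr]
      · exact mul_le_mul h hK (by positivity) ht
    _ = K * t := mul_comm t K

lemma mul_le_mul_add_of_abs_sub_le {ν ν' L L' K d ρ γ : ℝ} (hγ : 1 ≤ γ) (hν' : 0 ≤ ν')
    (hν'γ : ν' ≤ γ) (hνν' : |ν' - ν| ≤ ρ) (hL : |L| ≤ K) (hLL' : L' - L ≤ K * (d + ρ))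
    (hd : 0 ≤ d) : ν' * L' ≤ ν * L + 2 * γ * K * (d + ρ) := by
  have hρ : 0 ≤ ρ := (abs_nonneg _).trans hνν'
  have hK : 0 ≤ K := (abs_nonneg _).trans hL
  have hmove : ν' * (L' - L) ≤ γ * (K * (d + ρ)) :=
    calc ν' * (L' - L) ≤ ν' * (K * (d + ρ)) := mul_le_mul_of_nonneg_left hLL' hν'
      _ ≤ γ * (K * (d + ρ)) := mul_le_mul_of_nonneg_right hν'γ (by positivity)
  have hweight : (ν' - ν) * L ≤ ρ * K :=
    (le_abs_self _).trans ((abs_mul _ _).trans_le (mul_le_mul hνν' hL (abs_nonneg _) hρ))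
  nlinarith [mul_le_mul_of_nonneg_left (show ρ ≤ γ * (d + ρ) by nlinarith) hK]

lemma mul_log_dist_le_mul_log_dist_add {X : Type*} [PseudoMetricSpace X] {z z' a a' : X}
    {R δ γ0 γ1 ν ν' ρ : ℝ} (hR : 1 ≤ R) (hδ : 0 < δ) (hδR : δ ≤ R) (hγ0 : 0 < γ0)
    (hγ0ν : γ0 ≤ ν) (hγ1 : 1 ≤ γ1) (hν' : 0 ≤ ν') (hν'γ1 : ν' ≤ γ1)
    (hclose : dist a a' + |ν - ν'| ≤ ρ) (hzaR : dist z a ≤ R)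
    (hza : R * (δ / R) ^ (1 / ν) ≤ dist z a) (hz'a' : 0 < dist z' a') :
    ν' * log (dist z' a' / R) ≤
      ν * log (dist z a / R) + 2 * γ1 * (R / δ) ^ (1 / γ0) * (dist z z' + ρ) := by
  set K := (R / δ) ^ (1 / γ0)
  have hR0 : 0 < R := one_pos.trans_le hR
  have hK : 0 < K := by positivity
  have hRK : R / K ≤ dist z a := (div_rpow_one_div_le_mul_rpow hδ hδR hγ0 hγ0ν).trans hza
  have hza0 : 0 < dist z a := (by positivity : 0 < R / K).trans_le hRK
  have hinv : (dist z a)⁻¹ ≤ K := by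
    rw [inv_le_comm₀ hza0 hK]
    calc K⁻¹ = 1 / K := (one_div K).symm
      _ ≤ R / K := div_le_div_of_nonneg_right hR hK.le
      _ ≤ dist z a := hRK
  have hlog : |log (dist z a / R)| ≤ K := by
    refine abs_le.2 ⟨?_, ?_⟩
    · have : (dist z a / R)⁻¹ ≤ K := by
        rw [inv_div, div_le_iff₀ hza0]
        exact (div_le_iff₀' hK).1 hRK
      linarith [neg_inv_le_log (by positivity : 0 ≤ dist z a / R)]
    · exact (log_nonpos (by positivity) ((div_le_one hR0).2 hzaR)).trans hK.le
  have hρ : 0 ≤ ρ := by linarith [dist_nonneg (x := a) (y := a'), abs_nonneg (ν - ν')]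
  have hdist : dist z' a' - dist z a ≤ dist z z' + ρ := by
    linarith [dist_triangle4 z' z a a', dist_comm z z', abs_nonneg (ν - ν')]
  have hlogs : log (dist z' a' / R) - log (dist z a / R) ≤ K * (dist z z' + ρ) := by
    rw [log_div hz'a'.ne' hR0.ne', log_div hza0.ne' hR0.ne', sub_sub_sub_cancel_right]
    exact log_sub_log_le_mul hza0 hz'a' hinv (by positivity) hdist
  exact mul_le_mul_add_of_abs_sub_le hγ1 hν' hν'γ1
    (by rw [abs_sub_comm]; linarith [dist_nonneg (x := a) (y := a')]) hlog hlogs dist_nonneg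

theorem stmt_7_general (n : ℕ) (R0 : ℝ) (hR0 : 1 ≤ R0)
    (γ0 γ1 : ℝ) (hγ0 : 0 < γ0) (hγ1 : 1 ≤ γ1)
    (δ0 : ℝ) (hδ0R : δ0 < R0)
    (A A' : Finset (EuclideanSpace ℂ (Fin n))) (hA : A.Nonempty) (hA' : A'.Nonempty)
    (hAball : (A : Set (EuclideanSpace ℂ (Fin n))) ⊆ Metric.ball 0 (R0 / 2))
    (ν ν' : EuclideanSpace ℂ (Fin n) → ℝ)
    (hνlb : ∀ a ∈ A, γ0 ≤ ν a)
    (hν'pos : ∀ a ∈ A', 0 < ν' a)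
    (hν'sum : ∑ a ∈ A', ν' a ≤ γ1)
    (ρ : ℝ)
    (hcover : ∀ a ∈ A, ∃ a' ∈ A', ‖a - a'‖ + |ν a - ν' a'| ≤ ρ)
    (δ : ℝ) (hδ : 0 < δ) (hδδ0 : δ ≤ δ0)
    (z : EuclideanSpace ℂ (Fin n))
    (hzball : z ∈ Metric.ball (0 : EuclideanSpace ℂ (Fin n)) (R0 / 2))
    (hz : z ∉ ⋃ a ∈ A, Metric.ball a (R0 * (δ / R0) ^ (1 / ν a)))
    (z' : EuclideanSpace ℂ (Fin n))
    (hz' : z' ∉ ⋃ a ∈ A', Metric.ball a (R0 * (δ / R0) ^ (1 / ν' a))) :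
    A'.inf' hA' (fun a => ν' a * Real.log (‖z' - a‖ / R0))
      ≤ A.inf' hA (fun a => ν a * Real.log (‖z - a‖ / R0))
        + 2 * γ1 * (R0 / δ) ^ (1 / γ0) * (‖z - z'‖ + ρ) := by
  simp only [← dist_eq_norm] at hcover ⊢
  simp only [Set.mem_iUnion, mem_ball, not_exists, not_lt] at hz hz'
  obtain ⟨a₀, ha₀, hmin⟩ := A.exists_mem_eq_inf' hA fun a => ν a * log (dist z a / R0)
  obtain ⟨a', ha', hclose⟩ := hcover a₀ ha₀
  have hδR : δ ≤ R0 := hδδ0.trans hδ0R.le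
  have hzaR : dist z a₀ ≤ R0 := (dist_triangle_right z a₀ 0).trans
    (by linarith [mem_ball.1 hzball, mem_ball.1 (hAball ha₀)])
  have hz'a' : 0 < dist z' a' := lt_of_lt_of_le (by positivity) (hz' a' ha')
  have hν'γ1 : ν' a' ≤ γ1 :=
    (single_le_sum (fun a ha => (hν'pos a ha).le) ha').trans hν'sum
  rw [hmin]
  exact (inf'_le _ ha').trans <| mul_log_dist_le_mul_log_dist_add hR0 hδ hδR hγ0
    (hνlb a₀ ha₀) hγ1 (hν'pos a' ha').le hν'γ1 hclose hzaR (hz a₀ ha₀) hz'a'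

/-- case m = n. Lipschitz-type estimate for φ:
φ(z',A') ≤ φ(z,A) + 2γ1·(R0/δ)^{1/γ0}·(|z − z'| + ρ). -/
theorem stmt_7 (n : ℕ) (hn : 1 ≤ n) (R0 : ℝ) (hR0 : 1 ≤ R0)
    (γ0 γ1 : ℝ) (hγ0 : 0 < γ0) (hγ0' : γ0 ≤ 1) (hγ1 : 1 ≤ γ1)
    (δ0 : ℝ) (hδ0 : 0 < δ0) (hδ0R : δ0 < R0)
    (A A' : Finset (EuclideanSpace ℂ (Fin n))) (hA : A.Nonempty) (hA' : A'.Nonempty)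
    (hAball : (A : Set (EuclideanSpace ℂ (Fin n))) ⊆ Metric.ball 0 (R0 / 2))
    (hA'ball : (A' : Set (EuclideanSpace ℂ (Fin n))) ⊆ Metric.ball 0 (R0 / 2))
    (ν ν' : EuclideanSpace ℂ (Fin n) → ℝ)
    (hνpos : ∀ a ∈ A, 0 < ν a) (hνlb : ∀ a ∈ A, γ0 ≤ ν a) (hνsum : ∑ a ∈ A, ν a ≤ γ1)
    (hν'pos : ∀ a ∈ A', 0 < ν' a) (hν'lb : ∀ a ∈ A', γ0 ≤ ν' a)
    (hν'sum : ∑ a ∈ A', ν' a ≤ γ1)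
    (ρ : ℝ) (hρ : 0 ≤ ρ)
    (hcover : ∀ a ∈ A, ∃ a' ∈ A', ‖a - a'‖ + |ν a - ν' a'| ≤ ρ)
    (δ : ℝ) (hδ : 0 < δ) (hδδ0 : δ ≤ δ0)
    (z : EuclideanSpace ℂ (Fin n))
    (hzball : z ∈ Metric.ball (0 : EuclideanSpace ℂ (Fin n)) (R0 / 2))
    (hz : z ∉ ⋃ a ∈ A, Metric.ball a (R0 * (δ / R0) ^ (1 / ν a)))
    (z' : EuclideanSpace ℂ (Fin n))
    (hz'ball : z' ∈ Metric.ball (0 : EuclideanSpace ℂ (Fin n)) (R0 / 2))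
    (hz' : z' ∉ ⋃ a ∈ A', Metric.ball a (R0 * (δ / R0) ^ (1 / ν' a))) :
    A'.inf' hA' (fun a => ν' a * Real.log (‖z' - a‖ / R0))
      ≤ A.inf' hA (fun a => ν a * Real.log (‖z - a‖ / R0))
        + 2 * γ1 * (R0 / δ) ^ (1 / γ0) * (‖z - z'‖ + ρ) :=
  stmt_7_general n R0 hR0 γ0 γ1 hγ0 hγ1 δ0 hδ0R A A' hA hA' hAball ν ν' hνlb hν'pos hν'sum ρ hcover
    δ hδ hδδ0 z hzball hz z' hz'
end

section
/- Let n ≥ 1 be an integer, R0 ≥ 1, and let 0 < γ0 ≤ 1 ≤ γ1 and 0 < δ0 < R0 be real constants. Let A, A' ⊂ B(0,R0/2) ⊂ ℂ^n be nonempty finite sets with weight functions ν : A → (0,∞) and ν' : A' → (0,∞), each satisfying: all weights are ≥ γ0 and the total weight is ≤ γ1. Let ρ ≥ 0 and suppose there is a bijection β : A → A' such that |a − β(a)| + |ν(a) − ν'(β(a))| ≤ ρ for every a ∈ A. Then for every δ with 0 < δ ≤ δ0, every z ∈ B(0,R0/2) with z ∉ A_δ, and every z' ∈ B(0,R0/2)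 with z' ∉ A'_δ, one has ψ(z',A') ≤ ψ(z,A) + γ1·(1 + 1/γ0)·(R0/δ)^{1/γ0}·(|z − z'| + ρ). -/
/-!
Write `r = R0 (δ/R0)^{1/γ0}`, so that `R0 / r = (R0/δ)^{1/γ0}`. Since every weight is at least
`γ0` and `δ < R0`, a point outside `A_δ` is at distance at least `r` from every pole, where
`log (·/R0)` has slope at most `1/r` and absolute value at most `R0/r`. Comparing `ψ(z', A')` with
`ψ(z, A)` pole by pole along `β`, moving the point and the pole costs at most
`ν'(β a) (|z - z'| + ρ) / r ≤ ν'(β a) (|z - z'| + ρ) R0 / r` (as `R0 ≥ 1`), and changing the weight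
at most `ρ R0 / r`. Summing, the total weight is at most `γ1` and the number of poles at most
`γ1 / γ0`.
-/

open Finset Metric Real

lemma log_le_log_add_div {r c c' t : ℝ} (hr : 0 < r) (hrc : r ≤ c) (hc' : 0 < c') (ht : 0 ≤ t)
    (hcc' : c' ≤ c + t) : log c' ≤ log c + t / r := by
  have hc : 0 < c := hr.trans_le hrc
  calc log c' = log c + log (c' / c) := by rw [log_div hc'.ne' hc.ne']; ring
    _ ≤ log c + (c' - c) / c := by
        gcongr
        rw [sub_div, div_self hc.ne']
        exact log_le_sub_one_of_pos (div_pos hc' hc)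
    _ ≤ log c + t / c := by gcongr; linarith
    _ ≤ log c + t / r := by gcongr

lemma abs_log_div_le_div {r c R : ℝ} (hr : 0 < r) (hrc : r ≤ c) (hcR : c ≤ R) :
    |log (c / R)| ≤ R / r := by
  have hc : 0 < c := hr.trans_le hrc
  have hR : 0 < R := hc.trans_le hcR
  rw [abs_of_nonpos (log_nonpos (by positivity) ((div_le_one hR).2 hcR)), ← log_inv, inv_div]
  calc log (R / c) ≤ R / c - 1 := log_le_sub_one_of_pos (by positivity)
    _ ≤ R / r := by linarith [show R / c ≤ R / r by gcongr]

lemma le_norm_sub_of_notMem_ball_rpow {E : Type*} [SeminormedAddCommGroup E] {R0 δ γ0 ν : ℝ}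
    {z a : E} (hδ : 0 < δ) (hδR : δ ≤ R0) (hγ0 : 0 < γ0) (hγ0ν : γ0 ≤ ν)
    (hz : z ∉ ball a (R0 * (δ / R0) ^ (1 / ν))) : R0 * (δ / R0) ^ (1 / γ0) ≤ ‖z - a‖ := by
  have hR0 : 0 < R0 := hδ.trans_le hδR
  rw [mem_ball, not_lt, dist_eq_norm] at hz
  refine le_trans (mul_le_mul_of_nonneg_left ?_ hR0.le) hz
  exact rpow_le_rpow_of_exponent_ge (by positivity) ((div_le_one hR0).2 hδR)
    (one_div_le_one_div_of_le hγ0 hγ0ν)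

lemma mul_log_div_le {R r c c' t w w' : ℝ} (hR : 1 ≤ R) (hr : 0 < r) (hrc : r ≤ c)
    (hcR : c ≤ R) (hc' : 0 < c') (ht : 0 ≤ t) (hcc' : c' ≤ c + t) (hw' : 0 ≤ w') :
    w' * log (c' / R) ≤ w * log (c / R) + (|w' - w| + w' * t) * (R / r) := by
  have hR0 : 0 < R := one_pos.trans_le hR
  have hlog : log (c' / R) ≤ log (c / R) + t * (R / r) := by
    rw [log_div hc'.ne' hR0.ne', log_div (hr.trans_le hrc).ne' hR0.ne']
    have : t / r ≤ t * (R / r) := by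
      rw [mul_div_assoc']; gcongr; exact le_mul_of_one_le_right ht hR
    linarith [log_le_log_add_div hr hrc hc' ht hcc']
  have hweight : (w' - w) * log (c / R) ≤ |w' - w| * (R / r) := by
    calc (w' - w) * log (c / R) ≤ |w' - w| * |log (c / R)| := by
          rw [← abs_mul]; exact le_abs_self _
      _ ≤ |w' - w| * (R / r) := by gcongr; exact abs_log_div_le_div hr hrc hcR
  nlinarith [mul_le_mul_of_nonneg_left hlog hw']

lemma sum_mul_log_div_le_of_bijOn {E : Type*} [SeminormedAddCommGroup E] {A A' : Finset E}
    {ν ν' : E → ℝ} {β : E → E} (hβ : Set.BijOn β A A') {R r ρ : ℝ} (hR : 1 ≤ R) (hr : 0 < r)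
    {z z' : E} (hzA : ∀ a ∈ A, r ≤ ‖z - a‖ ∧ ‖z - a‖ ≤ R) (hz'A' : ∀ b ∈ A', 0 < ‖z' - b‖)
    (hν' : ∀ b ∈ A', 0 ≤ ν' b) (hβρ : ∀ a ∈ A, ‖a - β a‖ + |ν a - ν' (β a)| ≤ ρ) :
    ∑ b ∈ A', ν' b * log (‖z' - b‖ / R) ≤ ∑ a ∈ A, ν a * log (‖z - a‖ / R)
      + (#A * ρ + (∑ b ∈ A', ν' b) * (‖z - z'‖ + ρ)) * (R / r) := by
  have reindex (f : E → ℝ) : ∑ b ∈ A', f b = ∑ a ∈ A, f (β a) :=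
    (sum_nbij β (fun _ ha ↦ hβ.mapsTo ha) hβ.injOn hβ.surjOn fun _ _ ↦ rfl).symm
  have hterm (a : E) (ha : a ∈ A) : ν' (β a) * log (‖z' - β a‖ / R) ≤
      ν a * log (‖z - a‖ / R) + (ρ + ν' (β a) * (‖z - z'‖ + ρ)) * (R / r) := by
    have hb := hβ.mapsTo ha
    have hmove : ‖z' - β a‖ ≤ ‖z - a‖ + (‖z - z'‖ + ‖a - β a‖) := by
      simpa only [← dist_eq_norm, dist_comm z', add_comm, add_left_comm]
        using dist_triangle4 z' z a (β a)
    have hRr : 0 ≤ R / r := div_nonneg (by linarith) hr.le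
    have hρ := hβρ a ha
    rw [abs_sub_comm] at hρ
    calc _ ≤ ν a * log (‖z - a‖ / R)
          + (|ν' (β a) - ν a| + ν' (β a) * (‖z - z'‖ + ‖a - β a‖)) * (R / r) :=
          mul_log_div_le hR hr (hzA a ha).1 (hzA a ha).2 (hz'A' _ hb) (by positivity) hmove
            (hν' _ hb)
      _ ≤ _ := by
          gcongr
          · linarith [norm_nonneg (a - β a)]
          · exact hν' _ hb
          · linarith [abs_nonneg (ν' (β a) - ν a)]
  rw [reindex (fun b ↦ ν' b * log (‖z' - b‖ / R)), reindex ν']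
  calc _ ≤ ∑ a ∈ A, (ν a * log (‖z - a‖ / R) + (ρ + ν' (β a) * (‖z - z'‖ + ρ)) * (R / r)) :=
        sum_le_sum hterm
    _ = _ := by
        rw [sum_add_distrib, ← sum_mul, sum_add_distrib, ← sum_mul, sum_const, nsmul_eq_mul]

theorem stmt_9_general (n : ℕ) (R0 : ℝ) (hR0 : 1 ≤ R0)
    (γ0 γ1 : ℝ) (hγ0 : 0 < γ0)
    (δ0 : ℝ) (hδ0R : δ0 < R0)
    (A A' : Finset (EuclideanSpace ℂ (Fin n)))
    (hAball : (A : Set (EuclideanSpace ℂ (Fin n))) ⊆ Metric.ball 0 (R0 / 2))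
    (ν ν' : EuclideanSpace ℂ (Fin n) → ℝ)
    (hνlb : ∀ a ∈ A, γ0 ≤ ν a) (hνsum : ∑ a ∈ A, ν a ≤ γ1)
    (hν'pos : ∀ a ∈ A', 0 < ν' a) (hν'lb : ∀ a ∈ A', γ0 ≤ ν' a)
    (hν'sum : ∑ a ∈ A', ν' a ≤ γ1)
    (ρ : ℝ) (hρ : 0 ≤ ρ)
    (β : EuclideanSpace ℂ (Fin n) → EuclideanSpace ℂ (Fin n))
    (hβ : Set.BijOn β (A : Set (EuclideanSpace ℂ (Fin n)))
      (A' : Set (EuclideanSpace ℂ (Fin n))))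
    (hβρ : ∀ a ∈ A, ‖a - β a‖ + |ν a - ν' (β a)| ≤ ρ)
    (δ : ℝ) (hδ : 0 < δ) (hδδ0 : δ ≤ δ0)
    (z : EuclideanSpace ℂ (Fin n))
    (hzball : z ∈ Metric.ball (0 : EuclideanSpace ℂ (Fin n)) (R0 / 2))
    (hz : z ∉ ⋃ a ∈ A, Metric.ball a (R0 * (δ / R0) ^ (1 / ν a)))
    (z' : EuclideanSpace ℂ (Fin n))
    (hz' : z' ∉ ⋃ a ∈ A', Metric.ball a (R0 * (δ / R0) ^ (1 / ν' a))) :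
    ∑ a ∈ A', ν' a * Real.log (‖z' - a‖ / R0)
      ≤ ∑ a ∈ A, ν a * Real.log (‖z - a‖ / R0)
        + γ1 * (1 + 1 / γ0) * (R0 / δ) ^ (1 / γ0) * (‖z - z'‖ + ρ) := by
  have hδR : δ ≤ R0 := hδδ0.trans hδ0R.le
  have hR0pos : 0 < R0 := hδ.trans_le hδR
  set r := R0 * (δ / R0) ^ (1 / γ0) with hr_def
  have hr : 0 < r := by positivity
  have hK : R0 / r = (R0 / δ) ^ (1 / γ0) := by
    rw [hr_def, div_mul_cancel_left₀ hR0pos.ne', ← inv_rpow (by positivity), inv_div]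
  have hzA (a) (ha : a ∈ A) : r ≤ ‖z - a‖ ∧ ‖z - a‖ ≤ R0 :=
    ⟨le_norm_sub_of_notMem_ball_rpow hδ hδR hγ0 (hνlb a ha)
        fun h ↦ hz (Set.mem_iUnion₂.2 ⟨a, ha, h⟩),
      (norm_sub_le z a).trans
        (by linarith [mem_ball_zero_iff.1 hzball, mem_ball_zero_iff.1 (hAball ha)])⟩
  have hz'A' (b) (hb : b ∈ A') : 0 < ‖z' - b‖ := hr.trans_le <|
    le_norm_sub_of_notMem_ball_rpow hδ hδR hγ0 (hν'lb b hb)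
      fun h ↦ hz' (Set.mem_iUnion₂.2 ⟨b, hb, h⟩)
  have hcard : (#A : ℝ) ≤ γ1 / γ0 := by
    rw [le_div_iff₀ hγ0]
    simpa using (card_nsmul_le_sum A ν γ0 hνlb).trans hνsum
  have hcoeff : #A * ρ + (∑ b ∈ A', ν' b) * (‖z - z'‖ + ρ)
      ≤ γ1 * (1 + 1 / γ0) * (‖z - z'‖ + ρ) := by
    have hd := norm_nonneg (z - z')
    calc _ ≤ γ1 / γ0 * (‖z - z'‖ + ρ) + γ1 * (‖z - z'‖ + ρ) := by
          gcongr <;> linarith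
      _ = _ := by ring
  calc _ ≤ _ :=
        sum_mul_log_div_le_of_bijOn hβ hR0 hr hzA hz'A' (fun b hb ↦ (hν'pos b hb).le) hβρ
    _ ≤ _ := by
        rw [hK, mul_right_comm _ ((R0 / δ) ^ (1 / γ0))]
        gcongr

/-- case m = n. Lipschitz-type estimate for ψ along a bijection of poles:
ψ(z',A') ≤ ψ(z,A) + γ1·(1 + 1/γ0)·(R0/δ)^{1/γ0}·(|z − z'| + ρ). -/
theorem stmt_9 (n : ℕ) (hn : 1 ≤ n) (R0 : ℝ) (hR0 : 1 ≤ R0)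
    (γ0 γ1 : ℝ) (hγ0 : 0 < γ0) (hγ0' : γ0 ≤ 1) (hγ1 : 1 ≤ γ1)
    (δ0 : ℝ) (hδ0 : 0 < δ0) (hδ0R : δ0 < R0)
    (A A' : Finset (EuclideanSpace ℂ (Fin n))) (hA : A.Nonempty) (hA' : A'.Nonempty)
    (hAball : (A : Set (EuclideanSpace ℂ (Fin n))) ⊆ Metric.ball 0 (R0 / 2))
    (hA'ball : (A' : Set (EuclideanSpace ℂ (Fin n))) ⊆ Metric.ball 0 (R0 / 2))
    (ν ν' : EuclideanSpace ℂ (Fin n) → ℝ)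
    (hνpos : ∀ a ∈ A, 0 < ν a) (hνlb : ∀ a ∈ A, γ0 ≤ ν a) (hνsum : ∑ a ∈ A, ν a ≤ γ1)
    (hν'pos : ∀ a ∈ A', 0 < ν' a) (hν'lb : ∀ a ∈ A', γ0 ≤ ν' a)
    (hν'sum : ∑ a ∈ A', ν' a ≤ γ1)
    (ρ : ℝ) (hρ : 0 ≤ ρ)
    (β : EuclideanSpace ℂ (Fin n) → EuclideanSpace ℂ (Fin n))
    (hβ : Set.BijOn β (A : Set (EuclideanSpace ℂ (Fin n)))
      (A' : Set (EuclideanSpace ℂ (Fin n))))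
    (hβρ : ∀ a ∈ A, ‖a - β a‖ + |ν a - ν' (β a)| ≤ ρ)
    (δ : ℝ) (hδ : 0 < δ) (hδδ0 : δ ≤ δ0)
    (z : EuclideanSpace ℂ (Fin n))
    (hzball : z ∈ Metric.ball (0 : EuclideanSpace ℂ (Fin n)) (R0 / 2))
    (hz : z ∉ ⋃ a ∈ A, Metric.ball a (R0 * (δ / R0) ^ (1 / ν a)))
    (z' : EuclideanSpace ℂ (Fin n))
    (hz'ball : z' ∈ Metric.ball (0 : EuclideanSpace ℂ (Fin n)) (R0 / 2))
    (hz' : z' ∉ ⋃ a ∈ A', Metric.ball a (R0 * (δ / R0) ^ (1 / ν' a))) :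
    ∑ a ∈ A', ν' a * Real.log (‖z' - a‖ / R0)
      ≤ ∑ a ∈ A, ν a * Real.log (‖z - a‖ / R0)
        + γ1 * (1 + 1 / γ0) * (R0 / δ) ^ (1 / γ0) * (‖z - z'‖ + ρ) :=
  stmt_9_general n R0 hR0 γ0 γ1 hγ0 δ0 hδ0R A A' hAball ν ν' hνlb hνsum hν'pos hν'lb hν'sum ρ hρ β
    hβ hβρ δ hδ hδδ0 z hzball hz z' hz'
end

section
/- Let n ≥ 1 be an integer and R0 ≥ 1 a real constant. Let 0 < t0 ≤ R0, let z, z', a, a' ∈ ℂ^n satisfy t0 ≤ |z − a| ≤ R0 and |z' − a'| ≥ t0, and let ν, ν' > 0. Then ν'·log(|z' − a'|/R0) − ν·log(|z − a|/R0) ≤ (ν'/t0)·(|z' − z| + |a' − a|) + log(R0/t0)·|ν' − ν|. -/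
open Real

/-
Write r = |z - a| and r' = |z' - a'|. Splitting
ν' log(r'/R0) - ν log(r/R0) = ν' (log r' - log r) + (ν' - ν) log(r/R0),
the first term is at most ν' (r' - r)/r ≤ (ν'/t0) |r' - r| by log u ≤ u - 1, and the second is
at most |ν' - ν| log(R0/t0) because t0 ≤ r ≤ R0. Finally |r' - r| ≤ |z' - z| + |a' - a| by the
triangle inequality.
-/

theorem abs_norm_sub_sub_norm_sub_le {E : Type*} [SeminormedAddCommGroup E] (z z' a a' : E) :
    |‖z' - a'‖ - ‖z - a‖| ≤ ‖z' - z‖ + ‖a' - a‖ :=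
  calc |‖z' - a'‖ - ‖z - a‖| ≤ ‖(z' - a') - (z - a)‖ := abs_norm_sub_norm_le _ _
    _ = ‖(z' - z) - (a' - a)‖ := by congr 1; abel
    _ ≤ ‖z' - z‖ + ‖a' - a‖ := norm_sub_le _ _

namespace Real

theorem log_sub_log_le_sub_div {x y : ℝ} (hx : 0 < x) (hy : 0 < y) :
    log y - log x ≤ (y - x) / x := by
  have h := log_le_sub_one_of_pos (div_pos hy hx)
  rw [log_div hy.ne' hx.ne'] at h
  rwa [sub_div, div_self hx.ne']

theorem abs_log_div_le_log_div {t r R : ℝ} (ht : 0 < t) (htr : t ≤ r) (hrR : r ≤ R) :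
    |log (r / R)| ≤ log (R / t) := by
  have hr : 0 < r := ht.trans_le htr
  have hR : 0 < R := hr.trans_le hrR
  rw [abs_of_nonpos (log_nonpos (by positivity) ((div_le_one hR).mpr hrR)), ← log_inv, inv_div]
  exact log_le_log (by positivity) (div_le_div_of_nonneg_left hR.le ht htr)

theorem mul_log_div_sub_mul_log_div_le {t r r' R ν ν' : ℝ} (ht : 0 < t) (htr : t ≤ r)
    (hrR : r ≤ R) (htr' : t ≤ r') (hν' : 0 ≤ ν') :
    ν' * log (r' / R) - ν * log (r / R) ≤ ν' / t * |r' - r| + log (R / t) * |ν' - ν| := by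
  have hr : 0 < r := ht.trans_le htr
  have hr' : 0 < r' := ht.trans_le htr'
  have hR : 0 < R := hr.trans_le hrR
  have hsplit : ν' * log (r' / R) - ν * log (r / R)
      = ν' * (log r' - log r) + (ν' - ν) * log (r / R) := by
    rw [log_div hr'.ne' hR.ne', log_div hr.ne' hR.ne']
    ring
  have hradial : ν' * (log r' - log r) ≤ ν' / t * |r' - r| :=
    calc ν' * (log r' - log r) ≤ ν' * (|r' - r| / t) := by
          gcongr
          calc log r' - log r ≤ (r' - r) / r := log_sub_log_le_sub_div hr hr'
            _ ≤ |r' - r| / t := div_le_div₀ (abs_nonneg _) (le_abs_self _) ht htr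
      _ = ν' / t * |r' - r| := by ring
  have hweight : (ν' - ν) * log (r / R) ≤ log (R / t) * |ν' - ν| :=
    calc (ν' - ν) * log (r / R) ≤ |ν' - ν| * |log (r / R)| := by
          rw [← abs_mul]; exact le_abs_self _
      _ ≤ |ν' - ν| * log (R / t) := by gcongr; exact abs_log_div_le_log_div ht htr hrR
      _ = log (R / t) * |ν' - ν| := mul_comm _ _
  linarith

end Real

theorem stmt_11_general (n : ℕ) (R0 : ℝ)
    (t0 : ℝ) (ht0 : 0 < t0)
    (z z' a a' : EuclideanSpace ℂ (Fin n))
    (hza : t0 ≤ ‖z - a‖) (hzaR : ‖z - a‖ ≤ R0) (hz'a' : t0 ≤ ‖z' - a'‖)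
    (ν ν' : ℝ) (hν' : 0 < ν') :
    ν' * Real.log (‖z' - a'‖ / R0) - ν * Real.log (‖z - a‖ / R0)
      ≤ ν' / t0 * (‖z' - z‖ + ‖a' - a‖) + Real.log (R0 / t0) * |ν' - ν| :=
  (mul_log_div_sub_mul_log_div_le ht0 hza hzaR hz'a' hν'.le).trans <| by
    gcongr
    exact abs_norm_sub_sub_norm_sub_le z z' a a'

/-- pointwise comparison inequality, case m = n. -/
theorem stmt_11 (n : ℕ) (hn : 1 ≤ n) (R0 : ℝ) (hR0 : 1 ≤ R0)
    (t0 : ℝ) (ht0 : 0 < t0) (ht0R : t0 ≤ R0)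
    (z z' a a' : EuclideanSpace ℂ (Fin n))
    (hza : t0 ≤ ‖z - a‖) (hzaR : ‖z - a‖ ≤ R0) (hz'a' : t0 ≤ ‖z' - a'‖)
    (ν ν' : ℝ) (hν : 0 < ν) (hν' : 0 < ν') :
    ν' * Real.log (‖z' - a'‖ / R0) - ν * Real.log (‖z - a‖ / R0)
      ≤ ν' / t0 * (‖z' - z‖ + ‖a' - a‖) + Real.log (R0 / t0) * |ν' - ν| :=
  stmt_11_general n R0 t0 ht0 z z' a a' hza hzaR hz'a' ν ν' hν'
end
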